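/- arXiv:1909.09381 — 6 statements merged into one kernel-verified Lean document; each statement's English description precedes it below -/
import Mathlib

section
/- A signed graph (G,σ) is balanced (every circuit of G has positive sign product) if and only if the vertex set V(G) can be partitioned into two (possibly empty) sets A and B such that every edge with both endpoints in A or both endpoints in B is positive, and every edge with one endpoint in A and one in B is negative. -/
/-!
Fix a root in each connected component of `G` and give every vertex the sign of a walk from
its root. In a balanced signed graph this potential is well defined, because every closed walk
has positive sign: shortcutting a walk to its `bypass` only removes closed subwalks of the
form "edge followed by a path", which are circuits or an edge traversed twice. The sign of an
edge is then the product of the potentials of its ends, and `A` is where the potential is `1`.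
Conversely, such a potential makes every closed walk telescope to `f u * f u = 1`.
-/

namespace SimpleGraph

variable {V : Type*} {G : SimpleGraph V} (σ : Sym2 V → ℤˣ)

def Walk.sign {u v : V} (p : G.Walk u v) : ℤˣ := (p.edges.map σ).prod

def IsBalanced (G : SimpleGraph V) (σ : Sym2 V → ℤˣ) : Prop :=
  ∀ (u : V) (w : G.Walk u u), w.IsCycle → w.sign σ = 1

namespace Walk

variable {u v w : V}

@[simp]
theorem sign_nil : (nil : G.Walk u u).sign σ = 1 := rfl

@[simp]
theorem sign_cons (h : G.Adj u v) (p : G.Walk v w) :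
    (cons h p).sign σ = σ s(u, v) * p.sign σ := by
  simp [sign]

@[simp]
theorem sign_append (p : G.Walk u v) (q : G.Walk v w) :
    (p.append q).sign σ = p.sign σ * q.sign σ := by
  simp [sign]

@[simp]
theorem sign_reverse (p : G.Walk u v) : p.reverse.sign σ = p.sign σ := by
  simp [sign, List.prod_reverse]

@[simp]
theorem sign_copy {u' v' : V} (p : G.Walk u v) (hu : u = u') (hv : v = v') :
    (p.copy hu hv).sign σ = p.sign σ := by
  subst hu hv
  rfl

theorem sign_eq_mul_of_forall_adj {f : V → ℤˣ}
    (hf : ∀ ⦃a b : V⦄, G.Adj a b → σ s(a, b) = f a * f b) (p : G.Walk u v) :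
    p.sign σ = f u * f v := by
  induction p with
  | nil => simp [Int.units_mul_self]
  | @cons a b c h p ih =>
    rw [sign_cons, ih, hf h, mul_assoc, ← mul_assoc (f b), Int.units_mul_self, one_mul]

end Walk

namespace IsBalanced

variable {σ}

theorem sign_cons_eq_one_of_isPath (hσ : G.IsBalanced σ) {u v : V} (h : G.Adj u v)
    {q : G.Walk v u} (hq : q.IsPath) : (Walk.cons h q).sign σ = 1 := by
  by_cases he : s(u, v) ∈ q.edges
  · rw [hq.eq_adj_toWalk_of_mem_edges (Sym2.eq_swap ▸ he)]
    simp [Adj.toWalk, Sym2.eq_swap, Int.units_mul_self]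
  · exact hσ u _ ((Walk.cons_isCycle_iff q h).mpr ⟨hq, he⟩)

theorem sign_bypass [DecidableEq V] (hσ : G.IsBalanced σ) {u v : V} (p : G.Walk u v) :
    p.bypass.sign σ = p.sign σ := by
  induction p with
  | nil => rfl
  | @cons a b c h p ih =>
    rw [Walk.bypass]
    split_ifs with ha
    · have hloop := hσ.sign_cons_eq_one_of_isPath h (p.bypass_isPath.takeUntil ha)
      have hsplit := congrArg (Walk.sign σ) (p.bypass.take_spec ha)
      rw [Walk.sign_cons] at hloop
      rw [Walk.sign_append] at hsplit
      rw [Walk.sign_cons, ← ih, ← hsplit, ← mul_assoc, hloop, one_mul]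
    · simp [ih]

theorem sign_eq_one (hσ : G.IsBalanced σ) {u : V} (w : G.Walk u u) : w.sign σ = 1 := by
  classical
  have hnil : w.bypass = .nil := Walk.eq_nil_iff_nil.mpr (Walk.isPath_iff_nil.mp w.bypass_isPath)
  rw [← hσ.sign_bypass, hnil, Walk.sign_nil]

theorem sign_eq (hσ : G.IsBalanced σ) {u v : V} (p q : G.Walk u v) : p.sign σ = q.sign σ := by
  have hpq := hσ.sign_eq_one (p.append q.reverse)
  rwa [Walk.sign_append, Walk.sign_reverse, mul_eq_one_iff_eq_inv, Int.units_inv_eq_self] at hpq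

theorem exists_potential (hσ : G.IsBalanced σ) :
    ∃ f : V → ℤˣ, ∀ ⦃u v : V⦄, G.Adj u v → σ s(u, v) = f u * f v := by
  let root (v : V) : V := (G.connectedComponentMk v).out
  have hroot (v : V) : G.Reachable (root v) v :=
    ConnectedComponent.exact (G.connectedComponentMk v).out_eq
  let f (v : V) : ℤˣ := (hroot v).some.sign σ
  refine ⟨f, fun u v h => ?_⟩
  have hsame : root u = root v := by
    simp only [root, ConnectedComponent.connectedComponentMk_eq_of_adj h]
  have hfv : f v = f u * σ s(u, v) := by
    simp only [f]
    rw [hσ.sign_eq (hroot v).some (((hroot u).some.concat h).copy hsame rfl)]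
    simp [Walk.concat_eq_append]
  rw [hfv, ← mul_assoc, Int.units_mul_self, one_mul]

end IsBalanced

theorem isBalanced_iff_exists_potential :
    G.IsBalanced σ ↔ ∃ f : V → ℤˣ, ∀ ⦃u v : V⦄, G.Adj u v → σ s(u, v) = f u * f v := by
  refine ⟨IsBalanced.exists_potential, fun ⟨f, hf⟩ u w _ => ?_⟩
  rw [Walk.sign_eq_mul_of_forall_adj σ hf, Int.units_mul_self]

theorem exists_potential_iff_exists_partition :
    (∃ f : V → ℤˣ, ∀ ⦃u v : V⦄, G.Adj u v → σ s(u, v) = f u * f v) ↔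
      ∃ A : Set V, ∀ u v : V, G.Adj u v →
        (((u ∈ A ↔ v ∈ A) → σ s(u, v) = 1) ∧ (¬(u ∈ A ↔ v ∈ A) → σ s(u, v) = -1)) := by
  classical
  constructor
  · rintro ⟨f, hf⟩
    refine ⟨{v | f v = 1}, fun u v h => ?_⟩
    rw [hf h]
    rcases Int.units_eq_one_or (f u) with hu | hu <;>
      rcases Int.units_eq_one_or (f v) with hv | hv <;> simp [hu, hv]
  · rintro ⟨A, hA⟩
    refine ⟨fun v => if v ∈ A then 1 else -1, fun u v h => ?_⟩
    by_cases hu : u ∈ A <;> by_cases hv : v ∈ A <;> simp_all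

end SimpleGraph

theorem balanced_iff_partition_general {V : Type*} (G : SimpleGraph V)
    (σ : Sym2 V → ℤˣ) :
    (∀ (u : V) (w : G.Walk u u), w.IsCycle → (w.edges.map σ).prod = 1) ↔
      ∃ A : Set V, ∀ u v : V, G.Adj u v →
        (((u ∈ A ↔ v ∈ A) → σ s(u, v) = 1) ∧ (¬(u ∈ A ↔ v ∈ A) → σ s(u, v) = -1)) :=
  (G.isBalanced_iff_exists_potential σ).trans (G.exists_potential_iff_exists_partition σ)

/-- A signed graph `(G, σ)` is *balanced* if every circuit (cycle) has positive
sign product. It is balanced iff the vertex set can be partitioned into two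
(possibly empty) sets `A` and `B = Aᶜ` such that edges within `A` or within `B`
are positive and edges between `A` and `B` are negative. -/
theorem balanced_iff_partition {V : Type*} [Fintype V] (G : SimpleGraph V)
    (σ : Sym2 V → ℤˣ) :
    (∀ (u : V) (w : G.Walk u u), w.IsCycle → (w.edges.map σ).prod = 1) ↔
      ∃ A : Set V, ∀ u v : V, G.Adj u v →
        (((u ∈ A ↔ v ∈ A) → σ s(u, v) = 1) ∧ (¬(u ∈ A ↔ v ∈ A) → σ s(u, v) = -1)) :=
  balanced_iff_partition_general G σ
end

section
/- Two signed graphs (G,σ) and (G,σ') on the same underlying graph G are switching equivalent (one can be obtained from the other by a sequence of resignings at vertices) if and only if they have the same set of negative circuits. -/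
/-!
Switching by `s` multiplies the sign of a walk from `u` to `v` by `s u * s v`, so it preserves the
sign of every closed walk, in particular of every circuit. Conversely, put `τ := σ' σ`. If every
circuit is `τ`-positive, then so is every closed walk, since shortening it to a path by `bypass`
only removes circuits and edges traversed back and forth. Hence the `τ`-sign of a walk depends
only on its endpoints, and the `τ`-sign of a walk from a fixed root of each component to `v` is a
switching function turning `σ` into `σ'`.
-/

open SimpleGraph

/-- The switching function associated with `s : V → ℤˣ`: switching multiplies the
sign of every edge `uv` by `s u * s v`. -/
def switchFn {V : Type*} (s : V → ℤˣ) : Sym2 V → ℤˣ :=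
  Sym2.lift ⟨fun u v => s u * s v, fun u v => mul_comm (s u) (s v)⟩

lemma switchFn_mk {V : Type*} (s : V → ℤˣ) (u v : V) : switchFn s s(u, v) = s u * s v := rfl

lemma Int.units_eq_neg_one_iff_eq_neg_one {a b : ℤˣ} : (a = -1 ↔ b = -1) ↔ a = b := by
  rcases Int.units_eq_one_or a with rfl | rfl <;> rcases Int.units_eq_one_or b with rfl | rfl <;>
    decide

namespace SimpleGraph.Walk

variable {V : Type*} {G : SimpleGraph V}

lemma prod_map_switchFn_edges (s : V → ℤˣ) {u v : V} (p : G.Walk u v) :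
    (p.edges.map (switchFn s)).prod = s u * s v := by
  induction p with
  | nil => exact (Int.units_mul_self _).symm
  | @cons a b _ _ _ ih =>
    rw [edges_cons, List.map_cons, List.prod_cons, ih, switchFn_mk, mul_assoc,
      ← mul_assoc (s b), Int.units_mul_self, one_mul]

section Balanced

variable {M : Type*} [CommMonoid M] {τ : Sym2 V → M}
  (hτ : ∀ e, τ e * τ e = 1)
  (hcyc : ∀ (u : V) (c : G.Walk u u), c.IsCycle → (c.edges.map τ).prod = 1)
include hτ hcyc

lemma prod_map_edges_cons_eq_one_of_isPath {u v : V} (h : G.Adj u v) {p : G.Walk v u}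
    (hp : p.IsPath) : ((cons h p).edges.map τ).prod = 1 := by
  by_cases he : s(u, v) ∈ p.edges
  · rw [hp.eq_adj_toWalk_of_mem_edges (Sym2.eq_swap ▸ he)]
    simp [Sym2.eq_swap, hτ]
  · exact hcyc u _ ((cons_isCycle_iff p h).mpr ⟨hp, he⟩)

lemma prod_map_edges_bypass [DecidableEq V] {u v : V} (p : G.Walk u v) :
    (p.bypass.edges.map τ).prod = (p.edges.map τ).prod := by
  induction p with
  | nil => rfl
  | @cons u b _ h p ih =>
    rw [bypass]
    split_ifs with hu
    · have hloop := prod_map_edges_cons_eq_one_of_isPath hτ hcyc h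
        (p.bypass_isPath.takeUntil hu)
      rw [edges_cons, List.map_cons, List.prod_cons] at hloop
      have hsplit : (p.bypass.edges.map τ).prod = ((p.bypass.takeUntil u hu).edges.map τ).prod *
          ((p.bypass.dropUntil u hu).edges.map τ).prod := by
        conv_lhs => rw [← p.bypass.take_spec hu]
        rw [edges_append, List.map_append, List.prod_append]
      rw [edges_cons, List.map_cons, List.prod_cons, ← ih, hsplit, ← mul_assoc, hloop, one_mul]
    · simp only [edges_cons, List.map_cons, List.prod_cons, ih]

lemma prod_map_edges_eq_one_of_forall_isCycle {u : V} (p : G.Walk u u) :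
    (p.edges.map τ).prod = 1 := by
  classical
  rw [← prod_map_edges_bypass hτ hcyc, eq_nil_iff_nil.mpr (isPath_iff_nil.mp p.bypass_isPath)]
  rfl

lemma prod_map_edges_eq_of_forall_isCycle {u v : V} (p q : G.Walk u v) :
    (p.edges.map τ).prod = (q.edges.map τ).prod := by
  have hclosed := prod_map_edges_eq_one_of_forall_isCycle hτ hcyc (p.append q.reverse)
  rw [edges_append, edges_reverse, List.map_append, List.map_reverse, List.prod_append,
    List.prod_reverse] at hclosed
  rw [← one_mul (q.edges.map τ).prod, ← hclosed, mul_assoc, ← List.prod_map_mul]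
  simp [hτ]

end Balanced

end SimpleGraph.Walk

theorem SimpleGraph.exists_switchFn_eq_of_forall_isCycle {V : Type*} {G : SimpleGraph V}
    {τ : Sym2 V → ℤˣ}
    (hcyc : ∀ (u : V) (c : G.Walk u u), c.IsCycle → (c.edges.map τ).prod = 1) :
    ∃ s : V → ℤˣ, ∀ e ∈ G.edgeSet, τ e = switchFn s e := by
  have hroot (v : V) : G.Reachable (G.connectedComponentMk v).out v :=
    ConnectedComponent.exact (G.connectedComponentMk v).out_eq
  refine ⟨fun v => ((hroot v).some.edges.map τ).prod, Sym2.ind fun a b hab => ?_⟩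
  rw [mem_edgeSet] at hab
  have hsame : (G.connectedComponentMk b).out = (G.connectedComponentMk a).out := by
    rw [ConnectedComponent.sound hab.reachable]
  have hpath := Walk.prod_map_edges_eq_of_forall_isCycle (fun e => Int.units_mul_self (τ e)) hcyc
    ((hroot a).some.concat hab) ((hroot b).some.copy hsame rfl)
  rw [Walk.edges_concat, Walk.edges_copy, List.concat_eq_append, List.map_append,
    List.prod_append, List.map_singleton, List.prod_singleton] at hpath
  rw [switchFn_mk, ← hpath, ← mul_assoc, Int.units_mul_self, one_mul]

theorem switching_equivalent_iff_same_negative_circuits_general {V : Type*}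
    (G : SimpleGraph V) (σ σ' : Sym2 V → ℤˣ) :
    (∃ s : V → ℤˣ, ∀ e ∈ G.edgeSet, σ' e = switchFn s e * σ e) ↔
      ∀ (u : V) (w : G.Walk u u), w.IsCycle →
        ((w.edges.map σ).prod = -1 ↔ (w.edges.map σ').prod = -1) := by
  simp only [Int.units_eq_neg_one_iff_eq_neg_one]
  constructor
  · rintro ⟨s, hs⟩ u w -
    rw [List.map_congr_left fun e he => hs e (w.edges_subset_edgeSet he), List.prod_map_mul,
      Walk.prod_map_switchFn_edges, Int.units_mul_self, one_mul]
  · intro hcyc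
    obtain ⟨s, hs⟩ := exists_switchFn_eq_of_forall_isCycle (τ := fun e => σ' e * σ e)
      fun u c hc => by rw [List.prod_map_mul, ← hcyc u c hc, Int.units_mul_self]
    refine ⟨s, fun e he => ?_⟩
    rw [← hs e he, mul_assoc, Int.units_mul_self, mul_one]

/-- Zaslavsky's theorem: two signatures on the same graph are switching
equivalent iff they have the same set of negative circuits (cycles). -/
theorem switching_equivalent_iff_same_negative_circuits {V : Type*} [Fintype V]
    (G : SimpleGraph V) (σ σ' : Sym2 V → ℤˣ) :
    (∃ s : V → ℤˣ, ∀ e ∈ G.edgeSet, σ' e = switchFn s e * σ e) ↔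
      ∀ (u : V) (w : G.Walk u u), w.IsCycle →
        ((w.edges.map σ).prod = -1 ↔ (w.edges.map σ').prod = -1) :=
  switching_equivalent_iff_same_negative_circuits_general G σ σ'
end

section
/- If (G,σ) is a simple signed graph on n vertices, then its zero-free chromatic number satisfies γ*(G,σ) ≤ ⌈n/2⌉. -/
open SimpleGraph

/-- A zero-free coloring of `(G, σ)` with `k` colors: a map into
`{-k, …, -1, 1, …, k}` with `c u ≠ σ(uv) * c v` on every edge. -/
def IsZeroFreeColoring {V : Type*} (G : SimpleGraph V) (σ : Sym2 V → ℤˣ) (k : ℕ)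
    (c : V → ℤ) : Prop :=
  (∀ v, 1 ≤ |c v| ∧ |c v| ≤ (k : ℤ)) ∧
    ∀ u v : V, G.Adj u v → c u ≠ (σ s(u, v) : ℤ) * c v

/-- Zaslavsky's zero-free chromatic number `γ*`. -/
noncomputable def gammaStar {V : Type*} (G : SimpleGraph V) (σ : Sym2 V → ℤˣ) : ℕ :=
  sInf {k : ℕ | ∃ c : V → ℤ, IsZeroFreeColoring G σ k c}

/-!
Enumerate the vertices as `v₀, …, v_{n-1}` and give the pair `v_{2i}, v_{2i+1}` the colors
`i + 1` and `-σ(v_{2i}v_{2i+1}) (i + 1)`. Vertices of different pairs get colors of different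
absolute value, so they never conflict, and within a pair the sign is chosen so that the edge
between them (if any) is properly colored; this uses `⌈n/2⌉` colors.
-/

namespace IsZeroFreeColoring

variable {V : Type*} {G : SimpleGraph V} {σ : Sym2 V → ℤˣ}

/-- Only edges whose ends have colors of equal absolute value can be improperly colored. -/
theorem of_abs {k : ℕ} {c : V → ℤ} (hbound : ∀ v, 1 ≤ |c v| ∧ |c v| ≤ k)
    (hsame : ∀ u v, G.Adj u v → |c u| = |c v| → c u = -(σ s(u, v) : ℤ) * c v) :
    IsZeroFreeColoring G σ k c := by
  refine ⟨hbound, fun u v hadj hcol => ?_⟩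
  have hσ : |(σ s(u, v) : ℤ)| = 1 := Int.isUnit_iff_abs_eq.mp (σ s(u, v)).isUnit
  have habs : |c u| = |c v| := by rw [hcol, abs_mul, hσ, one_mul]
  have hzero : c u = 0 := by linarith [hsame u v hadj habs]
  have hpos := (hbound u).1
  rw [hzero, abs_zero] at hpos
  exact absurd hpos (by norm_num)

end IsZeroFreeColoring

section PairColoring

variable {V : Type*} {n : ℕ} (σ : Sym2 V → ℤˣ) (e : V ≃ Fin n)

/-- For `e v = 0` this is `v` itself, by truncated subtraction. -/
def predVertex (v : V) : V :=
  e.symm ⟨(e v : ℕ) - 1, by omega⟩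

theorem predVertex_eq {u v : V} (h : (e u : ℕ) + 1 = e v) : predVertex e v = u :=
  e.symm_apply_eq.mpr (Fin.ext (by simp only [← h, Nat.add_sub_cancel]))

def pairColoring (v : V) : ℤ :=
  if Even (e v : ℕ) then (((e v : ℕ) / 2 + 1 : ℕ) : ℤ)
  else -(σ s(predVertex e v, v) : ℤ) * (((e v : ℕ) / 2 + 1 : ℕ) : ℤ)

theorem abs_pairColoring (v : V) : |pairColoring σ e v| = (((e v : ℕ) / 2 + 1 : ℕ) : ℤ) := by
  have hσ := Int.isUnit_iff_abs_eq.mp (σ s(predVertex e v, v)).isUnit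
  unfold pairColoring
  split_ifs <;> simp only [neg_mul, abs_neg, abs_mul, hσ, one_mul, Nat.abs_cast]

theorem pairColoring_of_succ {u v : V} (h : (e u : ℕ) + 1 = e v) (hu : Even (e u : ℕ)) :
    pairColoring σ e v = -(σ s(u, v) : ℤ) * pairColoring σ e u := by
  have hv : ¬Even (e v : ℕ) := by rw [← h]; exact Nat.not_even_iff_odd.mpr hu.add_one
  have hdiv : (e v : ℕ) / 2 = (e u : ℕ) / 2 := by obtain ⟨k, hk⟩ := hu; omega
  simp only [pairColoring, if_pos hu, if_neg hv, predVertex_eq e h, hdiv]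

theorem pairColoring_isZeroFreeColoring (G : SimpleGraph V) :
    IsZeroFreeColoring G σ ((n + 1) / 2) (pairColoring σ e) := by
  refine IsZeroFreeColoring.of_abs (fun v => ?_) fun u v hadj habs => ?_
  · have hlt := (e v).isLt
    rw [abs_pairColoring]
    constructor <;> norm_cast <;> omega
  · rw [abs_pairColoring, abs_pairColoring, Nat.cast_inj] at habs
    have hne : (e u : ℕ) ≠ e v := fun h => hadj.ne (e.injective (Fin.ext h))
    rcases Nat.even_or_odd (e u : ℕ) with hu | hu
    · have hsucc : (e u : ℕ) + 1 = e v := by obtain ⟨k, hk⟩ := hu; omega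
      rw [pairColoring_of_succ σ e hsucc hu, ← mul_assoc, neg_mul_neg, Int.units_coe_mul_self,
        one_mul]
    · have hsucc : (e v : ℕ) + 1 = e u := by obtain ⟨k, hk⟩ := hu; omega
      have hv : Even (e v : ℕ) := by obtain ⟨k, hk⟩ := hu; exact ⟨k, by omega⟩
      rw [pairColoring_of_succ σ e hsucc hv, Sym2.eq_swap]

end PairColoring

/-- For a simple signed graph on `n` vertices, `γ*(G,σ) ≤ ⌈n/2⌉`. -/
theorem gammaStar_le_ceil_half {V : Type*} [Fintype V] (G : SimpleGraph V)
    (σ : Sym2 V → ℤˣ) :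
    gammaStar G σ ≤ (Fintype.card V + 1) / 2 :=
  Nat.sInf_le ⟨_, pairColoring_isZeroFreeColoring σ (Fintype.equivFin V) G⟩
end

section
/- For every signed graph (G,σ), the circular chromatic number and the (modular) chromatic number satisfy χ(G,σ) − 1 ≤ χ_c(G,σ) ≤ χ(G,σ). -/
open SimpleGraph

/-- `|x|_k`: the circular distance of `x` from `0` in `ℤ/kℤ`, i.e.
`min([x]_k, [-x]_k)` where `[x]_k` is the remainder of `x` modulo `k`. -/
def cdist (k : ℕ) (x : ℤ) : ℤ :=
  min (x % (k : ℤ)) ((-x) % (k : ℤ))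

/-- A `(k,d)`-coloring of a signed graph `(G, σ)`: a map `c : V → ℤ_k`
(represented by integers in `[0, k)`) with `d ≤ |c u − σ(uv)·c v|_k` for every
edge `uv`. -/
def IsKDColoring {V : Type*} (G : SimpleGraph V) (σ : Sym2 V → ℤˣ) (k d : ℕ)
    (c : V → ℤ) : Prop :=
  (∀ v, 0 ≤ c v ∧ c v < (k : ℤ)) ∧
    ∀ u v : V, G.Adj u v → (d : ℤ) ≤ cdist k (c u - (σ s(u, v) : ℤ) * c v)

/-- The (modular) chromatic number of `(G, σ)`: the least `k` (with `k ≥ 2`)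
such that `(G, σ)` has a `(k,1)`-coloring. -/
noncomputable def chiMod {V : Type*} (G : SimpleGraph V) (σ : Sym2 V → ℤˣ) : ℕ :=
  sInf {k : ℕ | 2 ≤ k ∧ ∃ c : V → ℤ, IsKDColoring G σ k 1 c}

/-- The circular chromatic number of `(G, σ)`: the infimum of `k/d` over all
pairs `(k, d)` of positive integers with `2d ≤ k` such that `(G, σ)` has a
`(k,d)`-coloring. -/
noncomputable def circChrom {V : Type*} (G : SimpleGraph V) (σ : Sym2 V → ℤˣ) : ℝ :=
  sInf {r : ℝ | ∃ k d : ℕ, 0 < d ∧ 2 * d ≤ k ∧ r = (k : ℝ) / (d : ℝ) ∧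
    ∃ c : V → ℤ, IsKDColoring G σ k d c}

private lemma one_le_cdist' {k : ℕ} (hk : 0 < (k:ℤ)) {z : ℤ} (h : ¬ (k:ℤ) ∣ z) :
    1 ≤ cdist k z := by
  have h1 : z % (k:ℤ) ≠ 0 := fun hc => h (Int.dvd_of_emod_eq_zero hc)
  have h2 : (-z) % (k:ℤ) ≠ 0 := fun hc => h (dvd_neg.mp (Int.dvd_of_emod_eq_zero hc))
  have h3 := Int.emod_nonneg z (by omega : (k:ℤ) ≠ 0)
  have h4 := Int.emod_nonneg (-z) (by omega : (k:ℤ) ≠ 0)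
  unfold cdist
  rcases le_total (z % (k:ℤ)) ((-z) % (k:ℤ)) with hle | hle
  · rw [min_eq_left hle]; omega
  · rw [min_eq_right hle]; omega

private lemma cdist_le_abs {k : ℕ} (hk : 0 < (k:ℤ)) {z w : ℤ} (h : (k:ℤ) ∣ z - w)
    (hw : |w| < (k:ℤ)) : cdist k z ≤ |w| := by
  obtain ⟨t, ht⟩ := h
  rcases le_or_gt 0 w with h0 | h0
  · have hz : z % (k:ℤ) = w := by
      have hzz : z = w + (k:ℤ) * t := by linarith
      rw [hzz, Int.add_mul_emod_self_left,
        Int.emod_eq_of_lt h0 (by rwa [abs_of_nonneg h0] at hw)]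
    calc cdist k z ≤ z % (k:ℤ) := min_le_left _ _
    _ = w := hz
    _ ≤ |w| := le_abs_self w
  · have hz : (-z) % (k:ℤ) = -w := by
      have hzz : -z = -w + (k:ℤ) * (-t) := by linarith
      rw [hzz, Int.add_mul_emod_self_left,
        Int.emod_eq_of_lt (by omega) (by rw [abs_of_neg h0] at hw; omega)]
    calc cdist k z ≤ (-z) % (k:ℤ) := min_le_right _ _
    _ = -w := hz
    _ ≤ |w| := neg_le_abs w

private lemma ediv_bounds (n q : ℤ) (hq : 0 < q) :
    q * (n / q) ≤ n ∧ n < q * (n / q) + q := by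
  have h1 := Int.emod_nonneg n (ne_of_gt hq)
  have h2 := Int.emod_lt_of_pos n hq
  have h3 := Int.emod_def n q
  constructor <;> linarith

private lemma core_not_dvd {k d : ℕ} (hd : 0 < d) (hk : 2 * d ≤ k) (M : ℤ)
    (hkM : (k:ℤ) < M * d) (hMpos : 0 < M) {s x y : ℤ} (hs : s = 1 ∨ s = -1)
    (hedge : (d:ℤ) ≤ cdist k (x - s * y)) :
    ¬ (M ∣ ((2*x*M + (k:ℤ))/(2*k) % M - s * ((2*y*M + (k:ℤ))/(2*k) % M))) := by
  intro hdvd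
  have hkpos : (0:ℤ) < k := by exact_mod_cast (by omega : 0 < k)
  obtain ⟨hA1, hA2⟩ := ediv_bounds (2*x*M + k) (2*k) (by linarith)
  obtain ⟨hB1, hB2⟩ := ediv_bounds (2*y*M + k) (2*k) (by linarith)
  set px := (2*x*M + (k:ℤ))/(2*(k:ℤ)) with hpx
  set py := (2*y*M + (k:ℤ))/(2*(k:ℤ)) with hpy
  have h1 : Int.ModEq M (px % M) px := Int.emod_emod_of_dvd px dvd_rfl
  have h2 : Int.ModEq M (py % M) py := Int.emod_emod_of_dvd py dvd_rfl
  have h3 : Int.ModEq M (px % M - s * (py % M)) (px - s * py) := h1.sub (h2.mul_left s)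
  have h4 : M ∣ (px - s * py) :=
    Int.modEq_zero_iff_dvd.mp (h3.symm.trans (Int.modEq_zero_iff_dvd.mpr hdvd))
  obtain ⟨m, hm⟩ := h4
  have hm' : 2*(k:ℤ)*px - 2*(k:ℤ)*(s*py) = 2*(k:ℤ)*(M*m) := by
    linear_combination 2*(k:ℤ)*hm
  have hub : 2*M*(x - s*y - k*m) < 2*k ∧ -(2*(k:ℤ)) ≤ 2*M*(x - s*y - k*m) := by
    rcases hs with rfl | rfl
    · constructor
      · linarith [hA2, hB1, hm']
      · linarith [hA1, hB2, hm']
    · constructor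
      · linarith [hA2, hB2, hm']
      · linarith [hA1, hB1, hm']
  have habs : M * |x - s*y - k*m| < M * d := by
    rcases abs_cases (x - s*y - (k:ℤ)*m) with ⟨he, h0⟩ | ⟨he, h0⟩ <;> rw [he] <;>
      linarith [hub.1, hub.2, hkM]
  have hwd : |x - s*y - (k:ℤ)*m| < d := lt_of_mul_lt_mul_left habs (le_of_lt hMpos)
  have hwk : |x - s*y - (k:ℤ)*m| < k := by
    have hdk : (d:ℤ) ≤ k := by exact_mod_cast (by omega : d ≤ k)
    linarith
  have hcd : cdist k (x - s*y) ≤ |x - s*y - (k:ℤ)*m| :=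
    cdist_le_abs hkpos ⟨m, by ring⟩ hwk
  linarith

private lemma step_coloring {V : Type*} {G : SimpleGraph V} {σ : Sym2 V → ℤˣ}
    {k d : ℕ} (hd : 0 < d) (hk : 2 * d ≤ k) {c : V → ℤ}
    (hc : IsKDColoring G σ k d c) :
    ∃ c' : V → ℤ, IsKDColoring G σ (k / d + 1) 1 c' := by
  have hKd : k < (k / d + 1) * d := by
    calc k = d * (k / d) + k % d := (Nat.div_add_mod k d).symm
    _ < d * (k / d) + d := by have := Nat.mod_lt k hd; omega
    _ = (k / d + 1) * d := by ring
  set M : ℤ := ((k / d + 1 : ℕ) : ℤ) with hM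
  have hMpos : (0:ℤ) < M := by rw [hM]; exact_mod_cast Nat.succ_pos _
  have hkM : (k:ℤ) < M * d := by rw [hM]; exact_mod_cast hKd
  refine ⟨fun v => ((2 * c v * M + (k:ℤ)) / (2 * k)) % M, ?_, ?_⟩
  · intro v
    exact ⟨Int.emod_nonneg _ (by omega),
      by rw [← hM]; exact Int.emod_lt_of_pos _ hMpos⟩
  · intro u v huv
    have hedge := hc.2 u v huv
    have hne := core_not_dvd hd hk M hkM hMpos
      (Int.isUnit_iff.mp (σ s(u,v)).isUnit) hedge
    simpa using one_le_cdist' (k := k/d+1) (by exact_mod_cast Nat.succ_pos _) hne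

private lemma step_mem {V : Type*} {G : SimpleGraph V} {σ : Sym2 V → ℤˣ}
    {k d : ℕ} (hd : 0 < d) (hk : 2 * d ≤ k) {c : V → ℤ}
    (hc : IsKDColoring G σ k d c) :
    (k / d + 1) ∈ {n : ℕ | 2 ≤ n ∧ ∃ c : V → ℤ, IsKDColoring G σ n 1 c} := by
  refine ⟨?_, step_coloring hd hk hc⟩
  have : 2 ≤ k / d := (Nat.le_div_iff_mul_le hd).mpr hk
  omega

/-- For every signed graph, `χ(G,σ) − 1 ≤ χ_c(G,σ) ≤ χ(G,σ)`. -/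
theorem circChrom_between {V : Type*} [Fintype V] (G : SimpleGraph V)
    (σ : Sym2 V → ℤˣ) :
    (chiMod G σ : ℝ) - 1 ≤ circChrom G σ ∧ circChrom G σ ≤ (chiMod G σ : ℝ) := by
  classical
  by_cases hS : {n : ℕ | 2 ≤ n ∧ ∃ c : V → ℤ, IsKDColoring G σ n 1 c}.Nonempty
  · have hmem := Nat.sInf_mem hS
    obtain ⟨hm2, cm, hcm⟩ := hmem
    have hTm : (↑(sInf {n : ℕ | 2 ≤ n ∧ ∃ c : V → ℤ, IsKDColoring G σ n 1 c}) : ℝ) ∈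
        {r : ℝ | ∃ k d : ℕ, 0 < d ∧ 2 * d ≤ k ∧ r = (k : ℝ) / (d : ℝ) ∧
          ∃ c : V → ℤ, IsKDColoring G σ k d c} := by
      exact ⟨_, 1, one_pos, by omega, by norm_num, cm, hcm⟩
    constructor
    · rw [circChrom, chiMod]
      apply le_csInf ⟨_, hTm⟩
      rintro r ⟨k, d, hd, hkd, rfl, c, hc⟩
      have h1 : sInf {n : ℕ | 2 ≤ n ∧ ∃ c : V → ℤ, IsKDColoring G σ n 1 c} ≤ k / d + 1 :=
        Nat.sInf_le (step_mem hd hkd hc)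
      have h2 : ((k / d + 1 : ℕ) : ℝ) ≤ (k : ℝ) / (d : ℝ) + 1 := by
        push_cast
        have h3 := Nat.cast_div_le (α := ℝ) (m := k) (n := d)
        linarith
      have h4 : ((sInf {n : ℕ | 2 ≤ n ∧ ∃ c : V → ℤ, IsKDColoring G σ n 1 c} : ℕ) : ℝ)
          ≤ ((k / d + 1 : ℕ) : ℝ) := by exact_mod_cast h1
      linarith
    · rw [circChrom, chiMod]
      apply csInf_le ?_ hTm
      refine ⟨0, ?_⟩
      rintro r ⟨k, d, hd, hkd, rfl, c, hc⟩
      positivity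
  · have hT : {r : ℝ | ∃ k d : ℕ, 0 < d ∧ 2 * d ≤ k ∧ r = (k : ℝ) / (d : ℝ) ∧
        ∃ c : V → ℤ, IsKDColoring G σ k d c} = ∅ := by
      ext r
      simp only [Set.mem_setOf_eq, Set.mem_empty_iff_false, iff_false]
      rintro ⟨k, d, hd, hkd, rfl, c, hc⟩
      exact hS ⟨k / d + 1, step_mem hd hkd hc⟩
    rw [circChrom, chiMod, hT, Real.sInf_empty,
      Set.not_nonempty_iff_eq_empty.mp hS, Nat.sInf_empty]
    norm_num
end

section
/- Let k and d be positive integers with 2d ≤ k. A signed graph (G,σ) has a (2k,2d)-coloring if and only if (G,σ) has a circular (k/d)-coloring. -/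
open SimpleGraph

/-- A circular `r`-coloring of a signed graph `(G, σ)`: a function
`f : V → [0, r)` such that for every edge `uv`, if `σ(uv) = 1` then
`1 ≤ |f u − f v| ≤ r − 1`, and if `σ(uv) = −1` then `1 ≤ |f u + f v − r| ≤ r − 1`. -/
def IsCircularColoring {V : Type*} (G : SimpleGraph V) (σ : Sym2 V → ℤˣ) (r : ℝ)
    (f : V → ℝ) : Prop :=
  (∀ v, 0 ≤ f v ∧ f v < r) ∧
    ∀ u v : V, G.Adj u v →
      (σ s(u, v) = 1 → 1 ≤ |f u - f v| ∧ |f u - f v| ≤ r - 1) ∧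
      (σ s(u, v) = -1 → 1 ≤ |f u + f v - r| ∧ |f u + f v - r| ≤ r - 1)

private lemma emod_eq_sub' (x n q : ℤ) (h0 : 0 ≤ x - n*q) (h1 : x - n*q < n) :
    x % n = x - n*q := by
  conv_lhs => rw [show x = (x - n*q) + n*q by ring]
  rw [Int.add_mul_emod_self_left]
  exact Int.emod_eq_of_lt h0 h1

private lemma floor_pair_bounds {A B : ℝ} {L R : ℤ} (h1 : (L:ℝ) ≤ A - B) (h2 : A - B ≤ (R:ℝ)) :
    (L ≤ ⌊A⌋ - ⌊B⌋ ∧ ⌊A⌋ - ⌊B⌋ ≤ R) ∧ (L ≤ ⌈A⌉ - ⌈B⌉ ∧ ⌈A⌉ - ⌈B⌉ ≤ R) := by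
  have hf1 : ⌊B + (L:ℝ)⌋ ≤ ⌊A⌋ := Int.floor_mono (by linarith)
  have hf2 : ⌊A⌋ ≤ ⌊B + (R:ℝ)⌋ := Int.floor_mono (by linarith)
  have hc1 : ⌈B + (L:ℝ)⌉ ≤ ⌈A⌉ := Int.ceil_mono (by linarith)
  have hc2 : ⌈A⌉ ≤ ⌈B + (R:ℝ)⌉ := Int.ceil_mono (by linarith)
  rw [Int.floor_add_intCast] at hf1 hf2
  rw [Int.ceil_add_intCast] at hc1 hc2
  omega

private lemma sum_pair_bounds {A B : ℝ} {L R : ℤ} (h1 : (L:ℝ) ≤ A + B) (h2 : A + B ≤ (R:ℝ)) :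
    L ≤ ⌈A⌉ + ⌊B⌋ ∧ ⌊A⌋ + ⌈B⌉ ≤ R := by
  have hl : ⌈-B + (L:ℝ)⌉ ≤ ⌈A⌉ := Int.ceil_mono (by linarith)
  have hr : ⌊A⌋ ≤ ⌊-B + (R:ℝ)⌋ := Int.floor_mono (by linarith)
  rw [Int.ceil_add_intCast, Int.ceil_neg] at hl
  rw [Int.floor_add_intCast, Int.floor_neg] at hr
  omega

private lemma cdist_build {K D x : ℤ} {n : ℕ} (hn : (n:ℤ) = 2*K) (hD : 0 < D)
    (h : (2*D ≤ x ∧ x ≤ 2*K - 2*D) ∨ (2*D ≤ -x ∧ -x ≤ 2*K - 2*D) ∨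
      (2*K + 2*D ≤ x ∧ x ≤ 4*K - 2*D)) :
    2*D ≤ cdist n x := by
  unfold cdist
  rw [le_min_iff, hn]
  rcases h with ⟨h1,h2⟩ | ⟨h1,h2⟩ | ⟨h1,h2⟩
  · constructor
    · rw [emod_eq_sub' x (2*K) 0 (by omega) (by omega)]; omega
    · rw [emod_eq_sub' (-x) (2*K) (-1) (by omega) (by omega)]; omega
  · constructor
    · rw [emod_eq_sub' x (2*K) (-1) (by omega) (by omega)]; omega
    · rw [emod_eq_sub' (-x) (2*K) 0 (by omega) (by omega)]; omega
  · constructor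
    · rw [emod_eq_sub' x (2*K) 1 (by omega) (by omega)]; omega
    · rw [emod_eq_sub' (-x) (2*K) (-2) (by omega) (by omega)]; omega

private lemma cdist_extract {K D x : ℤ} {n : ℕ} (hn : (n:ℤ) = 2*K)
    (hD : 0 < D)
    (hx1 : -(2*K) < x) (hx2 : x < 4*K)
    (h : 2*D ≤ cdist n x) :
    (2*D ≤ x ∧ x ≤ 2*K - 2*D) ∨ (2*D ≤ -x ∧ -x ≤ 2*K - 2*D) ∨
      (2*K + 2*D ≤ x ∧ x ≤ 4*K - 2*D) := by
  unfold cdist at h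
  rw [le_min_iff, hn] at h
  obtain ⟨h1, h2⟩ := h
  rcases le_or_gt 0 x with hx | hx
  · rcases lt_or_ge x (2*K) with hx' | hx'
    · rw [emod_eq_sub' x (2*K) 0 (by omega) (by omega)] at h1
      have hxpos : 0 < x := by omega
      rw [emod_eq_sub' (-x) (2*K) (-1) (by omega) (by omega)] at h2
      left; omega
    · rw [emod_eq_sub' x (2*K) 1 (by omega) (by omega)] at h1
      rw [emod_eq_sub' (-x) (2*K) (-2) (by omega) (by omega)] at h2
      right; right; omega
  · rw [emod_eq_sub' x (2*K) (-1) (by omega) (by omega)] at h1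
    rw [emod_eq_sub' (-x) (2*K) 0 (by omega) (by omega)] at h2
    right; left; omega

private lemma real_band {y : ℤ} {k d : ℕ} (hd : 0 < d)
    (h1 : 2*(d:ℤ) ≤ |y|) (h2 : |y| ≤ 2*(k:ℤ) - 2*(d:ℤ)) :
    1 ≤ |(y:ℝ)/(2*(d:ℝ))| ∧ |(y:ℝ)/(2*(d:ℝ))| ≤ (k:ℝ)/(d:ℝ) - 1 := by
  have hdR : (0:ℝ) < d := by exact_mod_cast hd
  have habs : |(y:ℝ)/(2*(d:ℝ))| = |(y:ℝ)|/(2*(d:ℝ)) := by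
    rw [abs_div, abs_of_pos (show (0:ℝ) < 2*(d:ℝ) by linarith)]
  have hy1 : 2*(d:ℝ) ≤ |(y:ℝ)| := by exact_mod_cast h1
  have hy2 : |(y:ℝ)| ≤ 2*(k:ℝ) - 2*(d:ℝ) := by exact_mod_cast h2
  constructor
  · rw [habs, le_div_iff₀ (by linarith)]; linarith
  · rw [habs, div_le_iff₀ (by linarith)]
    have hkey : ((k:ℝ)/(d:ℝ) - 1)*(2*(d:ℝ)) = 2*(k:ℝ) - 2*(d:ℝ) := by
      field_simp
    rw [hkey]; exact hy2

/-- For positive integers `k, d` with `2d ≤ k`: a signed graph has a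
`(2k,2d)`-coloring iff it has a circular `(k/d)`-coloring. -/
theorem kd_coloring_iff_circular {V : Type*} [Fintype V] (G : SimpleGraph V)
    (σ : Sym2 V → ℤˣ) (k d : ℕ) (hd : 0 < d) (hkd : 2 * d ≤ k) :
    (∃ c : V → ℤ, IsKDColoring G σ (2 * k) (2 * d) c) ↔
      ∃ f : V → ℝ, IsCircularColoring G σ ((k : ℝ) / (d : ℝ)) f := by
  have hD : (0:ℤ) < (d:ℤ) := by exact_mod_cast hd
  have hKD : 2*(d:ℤ) ≤ (k:ℤ) := by exact_mod_cast hkd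
  have hdR : (0:ℝ) < (d:ℝ) := by exact_mod_cast hd
  have hn : ((2*k : ℕ) : ℤ) = 2*(k:ℤ) := by push_cast; ring
  have h2d : ((2*d : ℕ) : ℤ) = 2*(d:ℤ) := by push_cast; ring
  constructor
  · rintro ⟨c, hb, he⟩
    have hb' : ∀ v, 0 ≤ c v ∧ c v < 2*(k:ℤ) := by
      intro v; have := hb v; rw [hn] at this; exact this
    refine ⟨fun v => (c v : ℝ) / (2*(d:ℝ)), fun v => ?_, fun u v huv => ?_⟩
    · obtain ⟨h0, h1⟩ := hb' v
      constructor
      · positivity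
      · rw [div_lt_div_iff₀ (by positivity) hdR]
        have h1R : (c v : ℝ) < 2*(k:ℝ) := by exact_mod_cast h1
        nlinarith
    · have hcd := he u v huv
      rw [h2d] at hcd
      obtain ⟨hbu1, hbu2⟩ := hb' u
      obtain ⟨hbv1, hbv2⟩ := hb' v
      rcases Int.units_eq_one_or (σ s(u,v)) with hσ | hσ
      · rw [hσ] at hcd
        simp only [Units.val_one, one_mul] at hcd
        constructor
        · intro _
          rcases cdist_extract hn hD (by omega) (by omega) hcd with h | h | h
          · have key : (c u : ℝ)/(2*(d:ℝ)) - (c v : ℝ)/(2*(d:ℝ))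
                = ((c u - c v : ℤ):ℝ)/(2*(d:ℝ)) := by push_cast; ring
            rw [key]
            exact real_band hd
              (by rw [abs_of_nonneg (by omega : (0:ℤ) ≤ c u - c v)]; omega)
              (by rw [abs_of_nonneg (by omega : (0:ℤ) ≤ c u - c v)]; omega)
          · have key : (c u : ℝ)/(2*(d:ℝ)) - (c v : ℝ)/(2*(d:ℝ))
                = ((c u - c v : ℤ):ℝ)/(2*(d:ℝ)) := by push_cast; ring
            rw [key]
            exact real_band hd
              (by rw [abs_of_nonpos (by omega : c u - c v ≤ 0)]; omega)
              (by rw [abs_of_nonpos (by omega : c u - c v ≤ 0)]; omega)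
          · exfalso; omega
        · intro h1
          rw [hσ] at h1
          exact absurd h1 (by decide)
      · rw [hσ] at hcd
        simp only [Units.val_neg, Units.val_one, neg_mul, one_mul, sub_neg_eq_add] at hcd
        constructor
        · intro h1
          rw [hσ] at h1
          exact absurd h1 (by decide)
        · intro _
          have key : (c u : ℝ)/(2*(d:ℝ)) + (c v : ℝ)/(2*(d:ℝ)) - (k:ℝ)/(d:ℝ)
              = ((c u + c v - 2*(k:ℤ) : ℤ):ℝ)/(2*(d:ℝ)) := by
            push_cast; field_simp
          rw [key]
          rcases cdist_extract hn hD (by omega) (by omega) hcd with h | h | h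
          · exact real_band hd
              (by rw [abs_of_nonpos (by omega : c u + c v - 2*(k:ℤ) ≤ 0)]; omega)
              (by rw [abs_of_nonpos (by omega : c u + c v - 2*(k:ℤ) ≤ 0)]; omega)
          · exfalso; omega
          · exact real_band hd
              (by rw [abs_of_nonneg (by omega : (0:ℤ) ≤ c u + c v - 2*(k:ℤ))]; omega)
              (by rw [abs_of_nonneg (by omega : (0:ℤ) ≤ c u + c v - 2*(k:ℤ))]; omega)
  · rintro ⟨f, hb, he⟩
    refine ⟨fun v => ⌊(d:ℝ) * f v⌋ + ⌈(d:ℝ) * f v⌉, fun v => ?_, fun u v huv => ?_⟩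
    · dsimp only
      obtain ⟨h0, h1⟩ := hb v
      have hA0 : (0:ℝ) ≤ (d:ℝ) * f v := by positivity
      have hA1 : (d:ℝ) * f v < (k:ℝ) := by
        have := mul_lt_mul_of_pos_left h1 hdR
        rwa [mul_div_cancel₀ _ (ne_of_gt hdR)] at this
      have hf0 : 0 ≤ ⌊(d:ℝ) * f v⌋ := Int.floor_nonneg.mpr hA0
      have hc0 : 0 ≤ ⌈(d:ℝ) * f v⌉ := Int.ceil_nonneg hA0
      have hf1 : ⌊(d:ℝ) * f v⌋ < (k:ℤ) := Int.floor_lt.mpr (by exact_mod_cast hA1)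
      have hc1 : ⌈(d:ℝ) * f v⌉ ≤ (k:ℤ) := Int.ceil_le.mpr (by exact_mod_cast le_of_lt hA1)
      rw [hn]
      omega
    · have hedge := he u v huv
      rw [h2d]
      rcases Int.units_eq_one_or (σ s(u,v)) with hσ | hσ
      · obtain ⟨h1, h2⟩ := hedge.1 hσ
        rw [hσ]
        simp only [Units.val_one, one_mul]
        have heq : |(d:ℝ) * f u - (d:ℝ) * f v| = (d:ℝ) * |f u - f v| := by
          rw [show (d:ℝ) * f u - (d:ℝ) * f v = (d:ℝ) * (f u - f v) from by ring,
            abs_mul, abs_of_pos hdR]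
        have hl : (d:ℝ) ≤ |(d:ℝ) * f u - (d:ℝ) * f v| := by
          rw [heq]; nlinarith
        have hr : |(d:ℝ) * f u - (d:ℝ) * f v| ≤ (k:ℝ) - (d:ℝ) := by
          have hub : (d:ℝ) * |f u - f v| ≤ (d:ℝ) * ((k:ℝ)/(d:ℝ) - 1) :=
            mul_le_mul_of_nonneg_left h2 (le_of_lt hdR)
          have : (d:ℝ) * ((k:ℝ)/(d:ℝ) - 1) = (k:ℝ) - (d:ℝ) := by field_simp
          rw [heq]; linarith
        rcases le_or_gt ((d:ℝ) * f v) ((d:ℝ) * f u) with hord | hord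
        · rw [abs_of_nonneg (by linarith)] at hl hr
          obtain ⟨⟨q1,q2⟩,⟨q3,q4⟩⟩ := floor_pair_bounds (L := (d:ℤ)) (R := (k:ℤ)-(d:ℤ))
            (A := (d:ℝ) * f u) (B := (d:ℝ) * f v)
            (by push_cast; linarith) (by push_cast; linarith)
          exact cdist_build hn hD (Or.inl ⟨by omega, by omega⟩)
        · rw [abs_of_nonpos (by linarith)] at hl hr
          obtain ⟨⟨q1,q2⟩,⟨q3,q4⟩⟩ := floor_pair_bounds (L := (d:ℤ)) (R := (k:ℤ)-(d:ℤ))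
            (A := (d:ℝ) * f v) (B := (d:ℝ) * f u)
            (by push_cast; linarith) (by push_cast; linarith)
          exact cdist_build hn hD (Or.inr (Or.inl ⟨by omega, by omega⟩))
      · obtain ⟨h1, h2⟩ := hedge.2 hσ
        rw [hσ]
        simp only [Units.val_neg, Units.val_one, neg_mul, one_mul, sub_neg_eq_add]
        have heq : |(d:ℝ) * f u + (d:ℝ) * f v - (k:ℝ)| = (d:ℝ) * |f u + f v - (k:ℝ)/(d:ℝ)| := by
          rw [show (d:ℝ) * f u + (d:ℝ) * f v - (k:ℝ) = (d:ℝ) * (f u + f v - (k:ℝ)/(d:ℝ)) from by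
            field_simp, abs_mul, abs_of_pos hdR]
        have hl : (d:ℝ) ≤ |(d:ℝ) * f u + (d:ℝ) * f v - (k:ℝ)| := by rw [heq]; nlinarith
        have hr : |(d:ℝ) * f u + (d:ℝ) * f v - (k:ℝ)| ≤ (k:ℝ) - (d:ℝ) := by
          have hub : (d:ℝ) * |f u + f v - (k:ℝ)/(d:ℝ)| ≤ (d:ℝ) * ((k:ℝ)/(d:ℝ) - 1) :=
            mul_le_mul_of_nonneg_left h2 (le_of_lt hdR)
          have : (d:ℝ) * ((k:ℝ)/(d:ℝ) - 1) = (k:ℝ) - (d:ℝ) := by field_simp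
          rw [heq]; linarith
        rcases le_or_gt (k:ℝ) ((d:ℝ) * f u + (d:ℝ) * f v) with hord | hord
        · rw [abs_of_nonneg (by linarith)] at hl hr
          have hs1 := sum_pair_bounds (A := (d:ℝ) * f u) (B := (d:ℝ) * f v)
            (L := (k:ℤ)+(d:ℤ)) (R := 2*(k:ℤ)-(d:ℤ))
            (by push_cast; linarith) (by push_cast; linarith)
          have hs2 := sum_pair_bounds (A := (d:ℝ) * f v) (B := (d:ℝ) * f u)
            (L := (k:ℤ)+(d:ℤ)) (R := 2*(k:ℤ)-(d:ℤ))
            (by push_cast; linarith) (by push_cast; linarith)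
          exact cdist_build hn hD (Or.inr (Or.inr ⟨by omega, by omega⟩))
        · rw [abs_of_nonpos (by linarith)] at hl hr
          have hs1 := sum_pair_bounds (A := (d:ℝ) * f u) (B := (d:ℝ) * f v)
            (L := (d:ℤ)) (R := (k:ℤ)-(d:ℤ))
            (by push_cast; linarith) (by push_cast; linarith)
          have hs2 := sum_pair_bounds (A := (d:ℝ) * f v) (B := (d:ℝ) * f u)
            (L := (d:ℤ)) (R := (k:ℤ)-(d:ℤ))
            (by push_cast; linarith) (by push_cast; linarith)
          exact cdist_build hn hD (Or.inl ⟨by omega, by omega⟩)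
end

section
/- Let (G,σ) be a signed graph and k a positive integer. If (G,σ) has a 2k-coloring (with color set {±1,…,±k}), then (G,σ) has a (4k,2)-coloring. In particular, if χ±(G,σ) = 2k, then χ_c(G,σ) ≤ χ±(G,σ). -/
open SimpleGraph

/-- The color set `M_n` of Máčajová–Raspaud–Škoviera:
`M_{2k} = {±1, …, ±k}` and `M_{2k+1} = {0, ±1, …, ±k}`. -/
def Mset (n : ℕ) : Set ℤ :=
  {x : ℤ | 2 * |x| ≤ (n : ℤ) ∧ (x = 0 → Odd n)}

/-- An `n`-coloring of a signed graph `(G, σ)`. -/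
def IsPMColoring {V : Type*} (G : SimpleGraph V) (σ : Sym2 V → ℤˣ) (n : ℕ)
    (c : V → ℤ) : Prop :=
  (∀ v, c v ∈ Mset n) ∧ ∀ u v : V, G.Adj u v → c u ≠ (σ s(u, v) : ℤ) * c v

/-- The signed chromatic number `χ±`. -/
noncomputable def chiPM {V : Type*} (G : SimpleGraph V) (σ : Sym2 V → ℤˣ) : ℕ :=
  sInf {n : ℕ | ∃ c : V → ℤ, IsPMColoring G σ n c}

/-!
Send the color `±i ∈ M_{2k}` to the odd number `±(2i - 1)`. This map is odd and injective, so
on an edge `uv` with `c u ≠ σ(uv) c v` the difference `c' u - σ(uv) c' v` of the new colors is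
a nonzero even number of absolute value at most `4k - 2`; modulo `4k` it stays at circular
distance at least `2` from `0`.
-/

lemma cdist_congr {m : ℕ} {x y : ℤ} (h : x ≡ y [ZMOD m]) : cdist m x = cdist m y := by
  unfold cdist
  rw [h, h.neg]

lemma two_le_emod_of_even {m : ℕ} {y : ℤ} (hm : Even m) (hy : Even y) (hy0 : y ≠ 0)
    (hym : |y| < m) : 2 ≤ y % (m : ℤ) := by
  have hm0 : (0 : ℤ) < m := (abs_pos.2 hy0).trans hym
  have hr0 : y % (m : ℤ) ≠ 0 := fun h0 =>
    hy0 (Int.eq_zero_of_abs_lt_dvd (Int.dvd_of_emod_eq_zero h0) hym)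
  have hr : Even (y % (m : ℤ)) := by
    rw [Int.emod_def]
    exact hy.sub (((Int.even_coe_nat m).2 hm).mul_right _)
  obtain ⟨r, hr⟩ := hr
  have := Int.emod_nonneg y hm0.ne'
  omega

lemma two_le_cdist_of_even {m : ℕ} {y : ℤ} (hm : Even m) (hy : Even y) (hy0 : y ≠ 0)
    (hym : |y| < m) : 2 ≤ cdist m y :=
  le_min (two_le_emod_of_even hm hy hy0 hym)
    (two_le_emod_of_even hm hy.neg (neg_ne_zero.2 hy0) (by rwa [abs_neg]))

lemma mem_Mset_two_mul {k : ℕ} {x : ℤ} : x ∈ Mset (2 * k) ↔ x ≠ 0 ∧ |x| ≤ k := by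
  simp only [Mset, Set.mem_ofPred_eq, Nat.not_odd_iff_even.2 (even_two_mul k), imp_false]
  push_cast
  omega

def oddLift (a : ℤ) : ℤ := 2 * a - a.sign

lemma strictMono_oddLift : StrictMono oddLift := by
  intro a b hab
  unfold oddLift
  rcases lt_trichotomy a 0 with ha | rfl | ha <;> rcases lt_trichotomy b 0 with hb | rfl | hb <;>
    simp only [Int.sign_eq_neg_one_of_neg, Int.sign_eq_one_of_pos, Int.sign_zero, *] <;> omega

lemma oddLift_neg (a : ℤ) : oddLift (-a) = -oddLift a := by
  simp only [oddLift, Int.sign_neg]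
  ring

lemma oddLift_units_mul (ε : ℤˣ) (a : ℤ) : oddLift (ε * a) = ε * oddLift a := by
  rcases Int.units_eq_one_or ε with rfl | rfl <;> simp [oddLift_neg]

lemma odd_oddLift {a : ℤ} (ha : a ≠ 0) : Odd (oddLift a) := by
  rcases lt_or_gt_of_ne ha with ha | ha <;>
    simp only [oddLift, Int.sign_eq_neg_one_of_neg, Int.sign_eq_one_of_pos, ha] <;>
    [exact ⟨a, by ring⟩; exact ⟨a - 1, by ring⟩]

lemma abs_oddLift_lt {a : ℤ} {k : ℕ} (ha : a ≠ 0) (hak : |a| ≤ k) :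
    |oddLift a| < 2 * k := by
  rw [abs_le] at hak
  rw [abs_lt]
  rcases lt_or_gt_of_ne ha with ha | ha <;>
    simp only [oddLift, Int.sign_eq_neg_one_of_neg, Int.sign_eq_one_of_pos, ha] <;> omega

lemma two_le_cdist_oddLift_sub {k : ℕ} {a b : ℤ} (ε : ℤˣ) (ha : a ∈ Mset (2 * k))
    (hb : b ∈ Mset (2 * k)) (hab : a ≠ ε * b) :
    2 ≤ cdist (4 * k) (oddLift a - ε * oddLift b) := by
  rw [mem_Mset_two_mul] at ha hb
  have hεb : ε * b ≠ 0 := mul_ne_zero ε.ne_zero hb.1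
  have hεb' : |ε * b| ≤ k := by
    rw [abs_mul, Int.isUnit_iff_abs_eq.1 ε.isUnit, one_mul]
    exact hb.2
  rw [← oddLift_units_mul]
  refine two_le_cdist_of_even ⟨2 * k, by ring⟩ ((odd_oddLift ha.1).sub_odd (odd_oddLift hεb))
    (sub_ne_zero.2 (strictMono_oddLift.injective.ne hab)) ?_
  calc |oddLift a - oddLift (ε * b)| ≤ |oddLift a| + |oddLift (ε * b)| := abs_sub _ _
    _ < 2 * k + 2 * k := add_lt_add (abs_oddLift_lt ha.1 ha.2) (abs_oddLift_lt hεb hεb')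
    _ = ((4 * k : ℕ) : ℤ) := by push_cast; ring

lemma IsPMColoring.isKDColoring_oddLift {V : Type*} {G : SimpleGraph V} {σ : Sym2 V → ℤˣ}
    {k : ℕ} {c : V → ℤ} (hc : IsPMColoring G σ (2 * k) c) :
    IsKDColoring G σ (4 * k) 2 (fun v => oddLift (c v) % (4 * k : ℕ)) := by
  refine ⟨fun v => ?_, fun u v huv => ?_⟩
  · obtain ⟨hv0, hvk⟩ := mem_Mset_two_mul.1 (hc.1 v)
    have hk : (0 : ℤ) < (4 * k : ℕ) := by
      have := Int.one_le_abs hv0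
      push_cast; omega
    exact ⟨Int.emod_nonneg _ hk.ne', Int.emod_lt_of_pos _ hk⟩
  have hmod : oddLift (c u) % (4 * k : ℕ) - σ s(u, v) * (oddLift (c v) % (4 * k : ℕ)) ≡
      oddLift (c u) - σ s(u, v) * oddLift (c v) [ZMOD (4 * k : ℕ)] :=
    (Int.mod_modEq _ _).sub ((Int.mod_modEq _ _).mul_left _)
  rw [cdist_congr hmod]
  exact two_le_cdist_oddLift_sub _ (hc.1 u) (hc.1 v) (hc.2 u v huv)

lemma circChrom_le_of_isKDColoring {V : Type*} {G : SimpleGraph V} {σ : Sym2 V → ℤˣ}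
    {k d : ℕ} {c : V → ℤ} (hd : 0 < d) (hdk : 2 * d ≤ k) (hc : IsKDColoring G σ k d c) :
    circChrom G σ ≤ k / d :=
  csInf_le ⟨0, by rintro _ ⟨k', d', -, -, rfl, -⟩; positivity⟩
    ⟨k, d, hd, hdk, rfl, c, hc⟩

lemma exists_isPMColoring_chiPM {V : Type*} {G : SimpleGraph V} {σ : Sym2 V → ℤˣ}
    (h : chiPM G σ ≠ 0) : ∃ c, IsPMColoring G σ (chiPM G σ) c :=
  Nat.sInf_mem (Nat.nonempty_of_pos_sInf (Nat.pos_of_ne_zero h))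

theorem circChrom_le_chiPM_of_even_general {V : Type*} (G : SimpleGraph V)
    (σ : Sym2 V → ℤˣ) (k : ℕ) (hk : 0 < k) :
    ((∃ c : V → ℤ, IsPMColoring G σ (2 * k) c) →
        ∃ c : V → ℤ, IsKDColoring G σ (4 * k) 2 c) ∧
      (chiPM G σ = 2 * k → circChrom G σ ≤ (chiPM G σ : ℝ)) := by
  have hKD : (∃ c : V → ℤ, IsPMColoring G σ (2 * k) c) →
      ∃ c : V → ℤ, IsKDColoring G σ (4 * k) 2 c :=
    fun ⟨_, hc⟩ => ⟨_, hc.isKDColoring_oddLift⟩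
  refine ⟨hKD, fun hχ => ?_⟩
  obtain ⟨c, hc⟩ := exists_isPMColoring_chiPM (G := G) (σ := σ) (by omega)
  obtain ⟨c', hc'⟩ := hKD ⟨c, hχ ▸ hc⟩
  calc circChrom G σ ≤ (4 * k : ℕ) / (2 : ℕ) :=
        circChrom_le_of_isKDColoring two_pos (by omega) hc'
    _ = chiPM G σ := by rw [hχ]; push_cast; ring

/-- If `(G, σ)` has a `2k`-coloring (with colors `{±1, …, ±k}`), then it has a
`(4k,2)`-coloring. In particular, if `χ±(G,σ) = 2k` then
`χ_c(G,σ) ≤ χ±(G,σ)`. -/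
theorem circChrom_le_chiPM_of_even {V : Type*} [Fintype V] (G : SimpleGraph V)
    (σ : Sym2 V → ℤˣ) (k : ℕ) (hk : 0 < k) :
    ((∃ c : V → ℤ, IsPMColoring G σ (2 * k) c) →
        ∃ c : V → ℤ, IsKDColoring G σ (4 * k) 2 c) ∧
      (chiPM G σ = 2 * k → circChrom G σ ≤ (chiPM G σ : ℝ)) :=
  circChrom_le_chiPM_of_even_general G σ k hk
end
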